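/- arXiv:1612.05522 — 6 statements merged into one kernel-verified Lean document; each statement's English description precedes it below -/
import Mathlib

section
/- For positive integers n and i, there exists a unique i-binomial expansion of n, i.e., unique integers n_i > n_{i-1} > ... > n_j ≥ j ≥ 1 such that n = C(n_i, i) + C(n_{i-1}, i-1) + ... + C(n_j, j). -/
/-- `ns = [n_i, n_{i-1}, …, n_j]` is the list of "tops" of the `i`-binomial
(Macaulay) expansion of `n`:  the tops are strictly decreasing, the bottoms are
`i, i-1, …, j` with `j = i - ns.length + 1 ≥ 1`, the last top `n_j` satisfies
`n_j ≥ j`, and `n = C(n_i,i) + C(n_{i-1},i-1) + ⋯ + C(n_j,j)`. -/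
def IsBinomialExpansion (n i : ℕ) (ns : List ℕ) : Prop :=
  ns ≠ [] ∧ ns.length ≤ i ∧ ns.Chain' (· > ·) ∧
  i + 1 ≤ ns.getLast! + ns.length ∧
  n = ∑ k ∈ Finset.range ns.length, (ns.getD k 0).choose (i - k)

/-- `MacaulayNext n i m` says `m = n^{<i>}`, computed from the `i`-binomial
expansion of `n` by `n^{<i>} = C(n_i+1,i+1) + ⋯ + C(n_j+1,j+1)`. -/
def MacaulayNext (n i m : ℕ) : Prop :=
  ∃ ns, IsBinomialExpansion n i ns ∧
    m = ∑ k ∈ Finset.range ns.length, (ns.getD k 0 + 1).choose (i - k + 1)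

/-- `MacaulayLE a i b` says `b ≤ a^{<i>}`, with the convention `0^{<i>} = 0`. -/
def MacaulayLE (a i b : ℕ) : Prop :=
  if a = 0 then b = 0 else ∃ m, MacaulayNext a i m ∧ b ≤ m

/-- `(c 0, c 1, …, c e)` is an O-sequence (satisfies Macaulay's condition). -/
def IsOSequence (c : ℕ → ℕ) (e : ℕ) : Prop :=
  c 0 = 1 ∧ ∀ i, 1 ≤ i → i + 1 ≤ e → MacaulayLE (c i) i (c (i + 1))

/-- `(H 0, …, H e)` is symmetric. -/
def IsSymmetric (H : ℕ → ℕ) (e : ℕ) : Prop :=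
  ∀ i ≤ e, H i = H (e - i)

/-- `(H 0, …, H e)` is unimodal. -/
def IsUnimodal (H : ℕ → ℕ) (e : ℕ) : Prop :=
  ∃ m, m ≤ e ∧ (∀ i, i < m → H i ≤ H (i + 1)) ∧
    ∀ i, m ≤ i → i < e → H (i + 1) ≤ H i

/-- The first difference of `H` (with `H_{-1} = 0`). -/
def FirstDiff (H : ℕ → ℕ) : ℕ → ℕ :=
  fun i => if i = 0 then H 0 else H i - H (i - 1)

/-- `(H 0, …, H e)` is an SI-sequence: it is symmetric and the first
difference of its first half `(H 0, …, H ⌊e/2⌋)` is an O-sequence. -/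
def IsSISequence (H : ℕ → ℕ) (e : ℕ) : Prop :=
  IsSymmetric H e ∧ IsOSequence (FirstDiff H) (e / 2)

/-!
The head `a` of an expansion of `n` with bottom `i` is forced: the tail is an expansion with
bottom `i - 1` and tops below `a`, so it sums to less than `C(a, i - 1)`, and Pascal's rule gives
`C(a, i) ≤ n < C(a + 1, i)`, a window that determines `a`. Uniqueness follows by induction on the
tail. For existence pick `a` greedily from this window; the remainder `n - C(a, i)` is then less
than `C(a, i - 1)`, so its expansion with bottom `i - 1` has head below `a`.
-/

theorem Monotone.eq_of_mem_Ico_of_mem_Ico {α : Type*} [Preorder α] {f : ℕ → α} (hf : Monotone f)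
    {x : α} {a b : ℕ} (ha : x ∈ Set.Ico (f a) (f (a + 1))) (hb : x ∈ Set.Ico (f b) (f (b + 1))) :
    a = b := by
  by_contra hne
  rcases Nat.lt_or_gt_of_ne hne with hab | hab
  · exact (ha.2.trans_le ((hf hab).trans hb.1)).false
  · exact (hb.2.trans_le ((hf hab).trans ha.1)).false

theorem Nat.lt_add_choose_succ (n k : ℕ) : n < (n + k + 1).choose (k + 1) := by
  induction n with
  | zero => simp
  | succ n ih =>
    rw [show n + 1 + k + 1 = n + k + 1 + 1 by ring, Nat.choose_succ_succ']
    have := Nat.choose_pos (show k ≤ n + k + 1 by omega)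
    omega

theorem Nat.exists_choose_le_lt_choose_succ (n k : ℕ) :
    ∃ a, a.choose (k + 1) ≤ n ∧ n < (a + 1).choose (k + 1) := by
  have hex : ∃ a, n < (a + 1).choose (k + 1) := ⟨n + k, Nat.lt_add_choose_succ n k⟩
  refine ⟨Nat.find hex, ?_, Nat.find_spec hex⟩
  rcases h : Nat.find hex with _ | a
  · simp
  · exact not_lt.mp (Nat.find_min hex (by omega))

namespace IsBinomialExpansion

theorem singleton_iff {n i a : ℕ} :
    IsBinomialExpansion n i [a] ↔ 0 < i ∧ i ≤ a ∧ n = a.choose i := by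
  simp only [IsBinomialExpansion, List.getLast!, List.getLast_singleton, List.length_singleton,
    Finset.sum_range_one, List.getD_cons_zero, Nat.sub_zero, ne_eq, reduceCtorEq,
    not_false_eq_true, true_and]
  exact ⟨fun ⟨hi, _, ha, hn⟩ => ⟨hi, by omega, hn⟩,
    fun ⟨hi, ha, hn⟩ => ⟨hi, List.isChain_singleton a, by omega, hn⟩⟩

theorem cons_cons_iff {n i a b : ℕ} {t : List ℕ} :
    IsBinomialExpansion n (i + 1) (a :: b :: t) ↔
      b < a ∧ ∃ m, n = a.choose (i + 1) + m ∧ IsBinomialExpansion m i (b :: t) := by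
  simp only [IsBinomialExpansion, List.length_cons, Finset.sum_range_succ' _ (t.length + 1),
    List.getD_cons_succ, List.getD_cons_zero, Nat.add_sub_add_right, Nat.sub_zero,
    ne_eq, reduceCtorEq, not_false_eq_true, true_and]
  rw [show (a :: b :: t).getLast! = (b :: t).getLast! by simp [List.getLast!]]
  constructor
  · rintro ⟨hlen, hchain, hlast, hsum⟩
    obtain ⟨hba, hchain⟩ := List.isChain_cons_cons.mp hchain
    exact ⟨hba, _, by rw [hsum, add_comm], by omega, hchain, by omega, rfl⟩
  · rintro ⟨hba, m, rfl, hlen, hchain, hlast, rfl⟩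
    exact ⟨by omega, List.isChain_cons_cons.mpr ⟨hba, hchain⟩, by omega, add_comm _ _⟩

variable {n i : ℕ}

theorem index_pos {ns : List ℕ} (h : IsBinomialExpansion n i ns) : 0 < i :=
  (List.length_pos_iff.mpr h.1).trans_le h.2.1

theorem head_bounds {a : ℕ} {t : List ℕ} (h : IsBinomialExpansion n i (a :: t)) :
    i ≤ a ∧ n ∈ Set.Ico (a.choose i) ((a + 1).choose i) := by
  induction t generalizing n i a with
  | nil =>
    obtain ⟨hi, hia, rfl⟩ := singleton_iff.mp h
    obtain ⟨j, rfl⟩ := Nat.exists_eq_add_one_of_ne_zero hi.ne'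
    have := Nat.choose_pos (show j ≤ a by omega)
    refine ⟨hia, le_rfl, ?_⟩
    rw [Nat.choose_succ_succ']
    omega
  | cons b t ih =>
    obtain ⟨j, rfl⟩ := Nat.exists_eq_add_one_of_ne_zero h.index_pos.ne'
    obtain ⟨hba, m, rfl, hm⟩ := cons_cons_iff.mp h
    obtain ⟨hjb, -, hmb⟩ := ih hm
    refine ⟨by omega, Nat.le_add_right _ _, ?_⟩
    have : (b + 1).choose j ≤ a.choose j := Nat.choose_le_choose j hba
    calc a.choose (j + 1) + m < a.choose j + a.choose (j + 1) := by omega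
      _ = (a + 1).choose (j + 1) := (Nat.choose_succ_succ' a j).symm

theorem pos {ns : List ℕ} (h : IsBinomialExpansion n i ns) : 0 < n := by
  obtain ⟨a, t, rfl⟩ := List.exists_cons_of_ne_nil h.1
  obtain ⟨hia, hn, -⟩ := head_bounds h
  exact (Nat.choose_pos hia).trans_le hn

theorem choose_head_lt {a b : ℕ} {t : List ℕ} (h : IsBinomialExpansion n i (a :: b :: t)) :
    a.choose i < n := by
  obtain ⟨j, rfl⟩ := Nat.exists_eq_add_one_of_ne_zero h.index_pos.ne'
  obtain ⟨-, m, rfl, hm⟩ := cons_cons_iff.mp h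
  exact Nat.lt_add_of_pos_right hm.pos

theorem head_eq {a b : ℕ} {s t : List ℕ} (h : IsBinomialExpansion n i (a :: s))
    (h' : IsBinomialExpansion n i (b :: t)) : a = b :=
  (Nat.choose_mono i).eq_of_mem_Ico_of_mem_Ico (head_bounds h).2 (head_bounds h').2

theorem unique {ns ms : List ℕ} (h : IsBinomialExpansion n i ns)
    (h' : IsBinomialExpansion n i ms) : ns = ms := by
  induction ns generalizing n i ms with
  | nil => exact absurd rfl h.1
  | cons a s ih =>
    obtain ⟨b, t, rfl⟩ := List.exists_cons_of_ne_nil h'.1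
    obtain rfl := head_eq h h'
    rcases s with _ | ⟨c, s⟩ <;> rcases t with _ | ⟨d, t⟩
    · rfl
    · exact absurd (singleton_iff.mp h).2.2 h'.choose_head_lt.ne'
    · exact absurd (singleton_iff.mp h').2.2 h.choose_head_lt.ne'
    · obtain ⟨j, rfl⟩ := Nat.exists_eq_add_one_of_ne_zero h.index_pos.ne'
      obtain ⟨-, m, rfl, hm⟩ := cons_cons_iff.mp h
      obtain ⟨-, m', hmm', hm'⟩ := cons_cons_iff.mp h'
      obtain rfl : m = m' := by omega
      rw [ih hm hm']

theorem exists_of_pos (hn : 0 < n) (hi : 0 < i) : ∃ ns, IsBinomialExpansion n i ns := by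
  induction i generalizing n with
  | zero => omega
  | succ j ih =>
    rcases Nat.eq_zero_or_pos j with rfl | hj
    · exact ⟨[n], singleton_iff.mpr ⟨one_pos, hn, (Nat.choose_one_right n).symm⟩⟩
    obtain ⟨a, hle, hlt⟩ := Nat.exists_choose_le_lt_choose_succ n j
    obtain ⟨m, rfl⟩ := Nat.exists_eq_add_of_le hle
    rcases Nat.eq_zero_or_pos m with rfl | hm
    · refine ⟨[a], singleton_iff.mpr ⟨j.succ_pos, ?_, rfl⟩⟩
      by_contra hlt
      rw [Nat.choose_eq_zero_of_lt (not_le.mp hlt)] at hn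
      exact hn.false
    · obtain ⟨ns, hns⟩ := ih hm hj
      obtain ⟨b, t, rfl⟩ := List.exists_cons_of_ne_nil hns.1
      have hba : b.choose j < a.choose j := by
        rw [Nat.choose_succ_succ'] at hlt
        exact (head_bounds hns).2.1.trans_lt (by omega)
      exact ⟨a :: b :: t, cons_cons_iff.mpr ⟨(Nat.choose_mono j).reflect_lt hba, m, rfl, hns⟩⟩

end IsBinomialExpansion

/-- For positive integers `n` and `i`, the `i`-binomial expansion of `n`
exists and is unique. -/
theorem binomial_expansion_exists_unique (n i : ℕ) (hn : 0 < n) (hi : 0 < i) :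
    ∃! ns : List ℕ, IsBinomialExpansion n i ns := by
  obtain ⟨ns, hns⟩ := IsBinomialExpansion.exists_of_pos hn hi
  exact ⟨ns, hns, fun ms hms => hms.unique hns⟩
end

section
/- The sequence (1, 10, 14, 20, 14, 10, 1) is symmetric and unimodal, but its first difference (1, 9, 4, 6) violates Macaulay's growth condition from degree 2 to degree 3; that is, 6 > 4^{<2>}. -/
/-! Since `C(4,2) = 6 > 4`, every top of a `2`-binomial expansion of `4` is at most `3`, which
leaves finitely many candidates; only `[3, 1]` qualifies, so `4^{<2>} = C(4,3) + C(2,2) = 5`.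
The claims about the sequence itself are finite checks. -/

theorem IsBinomialExpansion.choose_head_le {n i a : ℕ} {l : List ℕ}
    (h : IsBinomialExpansion n i (a :: l)) : a.choose i ≤ n := by
  obtain ⟨-, -, -, -, hsum⟩ := h
  rw [hsum]
  exact Finset.single_le_sum (f := fun k => ((a :: l).getD k 0).choose (i - k))
    (fun _ _ => Nat.zero_le _) (Finset.mem_range.2 (Nat.succ_pos _))

theorem IsBinomialExpansion.head_lt {n i a c : ℕ} {l : List ℕ}
    (h : IsBinomialExpansion n i (a :: l)) (hc : n < c.choose i) : a < c := by
  by_contra! hca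
  exact (Nat.choose_le_choose i hca).trans h.choose_head_le |>.not_gt hc

theorem isBinomialExpansion_four_two_iff {ns : List ℕ} :
    IsBinomialExpansion 4 2 ns ↔ ns = [3, 1] := by
  constructor
  · intro h
    match ns, h with
    | [a], h =>
      have ha : a < 4 := h.head_lt (by decide)
      obtain ⟨-, -, -, hlast, hsum⟩ := h
      interval_cases a <;> simp_all
    | [a, b], h =>
      have ha : a < 4 := h.head_lt (by decide)
      obtain ⟨-, -, hchain, hlast, hsum⟩ := h
      have hba : a > b := List.isChain_pair.1 hchain
      interval_cases a <;> interval_cases b <;> simp_all [Finset.sum_range_succ]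
    | _ :: _ :: _ :: _, h => simp [IsBinomialExpansion] at h
  · rintro rfl
    exact ⟨by simp, by simp, List.isChain_pair.2 (by norm_num), by simp,
      by simp [Finset.sum_range_succ]⟩

theorem macaulayNext_four_two_iff {m : ℕ} : MacaulayNext 4 2 m ↔ m = 5 := by
  simp [MacaulayNext, isBinomialExpansion_four_two_iff, Finset.sum_range_succ]

theorem macaulayLE_four_two_iff {b : ℕ} : MacaulayLE 4 2 b ↔ b ≤ 5 := by
  simp [MacaulayLE, macaulayNext_four_two_iff]

/-- The sequence `(1,10,14,20,14,10,1)` is symmetric and unimodal, but its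
first difference `(1,9,4,6)` violates Macaulay's growth condition from degree
2 to degree 3, since `6 > 4^{<2>} (= 5)`. -/
theorem example_1_10_14_20 :
    letI H : ℕ → ℕ := fun i => [1, 10, 14, 20, 14, 10, 1].getD i 0
    IsSymmetric H 6 ∧ IsUnimodal H 6 ∧
      FirstDiff H 0 = 1 ∧ FirstDiff H 1 = 9 ∧ FirstDiff H 2 = 4 ∧
      FirstDiff H 3 = 6 ∧
      (∀ m, MacaulayNext 4 2 m → 6 > m) ∧ ¬ MacaulayLE 4 2 6 := by
  refine ⟨by unfold IsSymmetric; decide, ⟨3, by decide⟩, rfl, rfl, rfl, rfl,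
    fun m hm => by rw [macaulayNext_four_two_iff.1 hm]; norm_num,
    by rw [macaulayLE_four_two_iff]; norm_num⟩
end

section
/- For every integer e ≥ 6, the sequence H with H_0 = H_e = 1 and H_i = min(C(i+2,2), (i+1)+C(e-i+1,2)) + min(C(e-i+2,2), (e-i+1)+C(i+1,2)) for 1 ≤ i ≤ e-1 is symmetric and unimodal. -/
private lemma choose2_succ (n : ℕ) : (n+1).choose 2 = n.choose 2 + n := by
  rw [Nat.choose_two_right, Nat.choose_two_right]
  have := Nat.triangle_succ n
  omega

private def hhAux (e i : ℕ) : ℕ :=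
  min ((i + 2).choose 2) ((i + 1) + (e - i + 1).choose 2)

private def HHAux (e : ℕ) : ℕ → ℕ :=
  fun i => if i = 0 ∨ i = e then 1 else hhAux e i + hhAux e (e - i)

private lemma HH_symm (e : ℕ) : IsSymmetric (HHAux e) e := by
  intro i hi
  by_cases h0 : i = 0 ∨ i = e
  · have h1 : e - i = 0 ∨ e - i = e := by omega
    simp only [HHAux, if_pos h0, if_pos h1]
  · have h1 : ¬(e - i = 0 ∨ e - i = e) := by omega
    simp only [HHAux, if_neg h0, if_neg h1]
    have h2 : e - (e - i) = i := by omega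
    rw [h2, Nat.add_comm]

private lemma core (i k : ℕ) (h : i ≤ k) :
    min ((i+2).choose 2) (i+1+(k+2).choose 2) + min ((k+3).choose 2) (k+2+(i+1).choose 2)
    ≤ min ((i+3).choose 2) (i+2+(k+1).choose 2) + min ((k+2).choose 2) (k+1+(i+2).choose 2) := by
  have c1 : (i+2).choose 2 = (i+1).choose 2 + (i+1) := choose2_succ (i+1)
  have c2 : (i+3).choose 2 = (i+2).choose 2 + (i+2) := choose2_succ (i+2)
  have c3 : (k+2).choose 2 = (k+1).choose 2 + (k+1) := choose2_succ (k+1)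
  have c4 : (k+3).choose 2 = (k+2).choose 2 + (k+2) := choose2_succ (k+2)
  have hab : (i+1).choose 2 ≤ (k+1).choose 2 := Nat.choose_le_choose 2 (by omega)
  omega

private lemma HH_step (e i : ℕ) (he : 6 ≤ e) (h2 : 2*i+1 ≤ e) :
    HHAux e i ≤ HHAux e (i+1) := by
  rcases Nat.eq_zero_or_pos i with rfl | hi
  · have h1 : ¬(0 + 1 = 0 ∨ 0 + 1 = e) := by omega
    have h0 : HHAux e 0 = 1 := by simp [HHAux]
    have hst : HHAux e (0+1) = hhAux e (0+1) + hhAux e (e - (0+1)) := by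
      simp only [HHAux, if_neg h1]
    have h3 : (0 + 1 + 2).choose 2 = 3 := rfl
    have : 1 ≤ hhAux e (0+1) := by unfold hhAux; rw [h3]; omega
    omega
  · obtain ⟨k, hk, rfl⟩ : ∃ k, i ≤ k ∧ e = i + k + 1 := ⟨e - i - 1, by omega, by omega⟩
    have hni : ¬(i = 0 ∨ i = i+k+1) := by omega
    have hni1 : ¬(i+1 = 0 ∨ i+1 = i+k+1) := by omega
    simp only [HHAux, if_neg hni, if_neg hni1]
    have s1 : i+k+1-i = k+1 := by omega
    have s2 : i+k+1-(i+1) = k := by omega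
    rw [s1, s2]
    unfold hhAux
    have t1 : i+k+1-i+1 = k+2 := by omega
    have t2 : i+k+1-(k+1)+1 = i+1 := by omega
    have t3 : i+k+1-(i+1)+1 = k+1 := by omega
    have t4 : i+k+1-k+1 = i+2 := by omega
    rw [t1, t2, t3, t4]
    exact core i k hk

private lemma HH_unimodal (e : ℕ) (he : 6 ≤ e) : IsUnimodal (HHAux e) e := by
  refine ⟨(e+1)/2, by omega, ?_, ?_⟩
  · intro i hi
    exact HH_step e i he (by omega)
  · intro i hmi hie
    have h1 : HHAux e (i+1) = HHAux e (e-(i+1)) := HH_symm e (i+1) (by omega)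
    have h2 : HHAux e i = HHAux e (e-i) := HH_symm e i (by omega)
    rw [h1, h2]
    have h3 : e - i = (e - (i+1)) + 1 := by omega
    rw [h3]
    exact HH_step e (e-(i+1)) he (by omega)

/-- For every `e ≥ 6`, the Gorenstein sequence `H` obtained as the trivial
extension of Iarrobino's level sequence is symmetric and unimodal. -/
theorem trivial_extension_symmetric_unimodal (e : ℕ) (he : 6 ≤ e) :
    letI h : ℕ → ℕ := fun i => min ((i + 2).choose 2) ((i + 1) + (e - i + 1).choose 2)
    letI H : ℕ → ℕ := fun i => if i = 0 ∨ i = e then 1 else h i + h (e - i)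
    IsSymmetric H e ∧ IsUnimodal H e :=
  ⟨HH_symm e, HH_unimodal e he⟩
end

section
/- For every integer e ≥ 6, the sequence H with H_0 = H_e = 1 and H_i = min(C(i+2,2), (i+1)+C(e-i+1,2)) + min(C(e-i+2,2), (e-i+1)+C(i+1,2)) for 1 ≤ i ≤ e-1 is not an SI-sequence: its first difference (1, H_1-1, H_2-H_1, H_3-H_2, ...) equals (1, e+3, 4, 6, ...) and fails Macaulay's growth bound from degree 2 to degree 3. -/
/-!
Writing `C(i+2,2) = (i+1) + C(i+1,2)`, each summand of `H_i` is `(i+1) + C(min(i,e-i)+1, 2)`, so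
for `0 < i < e` the sequence is `H_i = e + 2 + 2 C(m+1, 2)` with `m = min(i, e-i)`. For `e ≥ 6` this
gives `H_1, H_2, H_3 = e+4, e+8, e+14`, hence first differences `e+3, 4, 6`. The only
`2`-binomial expansion of `4` is `C(3,2) + C(1,1)`, so `4^{<2>} = C(4,3) + C(2,2) = 5 < 6`.
-/

theorem MacaulayNext.eq_five_of_four_two {m : ℕ} (hm : MacaulayNext 4 2 m) : m = 5 := by
  obtain ⟨ns, ⟨hne, hlen, hchain, hlast, hsum⟩, rfl⟩ := hm
  have choose_two_ge_six {a : ℕ} (ha : 4 ≤ a) : 6 ≤ a.choose 2 :=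
    Nat.choose_le_choose 2 ha
  rcases ns with _ | ⟨a, _ | ⟨b, _ | ⟨_, _⟩⟩⟩
  · exact (hne rfl).elim
  · have hsum : a.choose 2 = 4 := by simpa using hsum.symm
    rcases le_or_gt a 3 with ha | ha
    · interval_cases a <;> simp at hsum
    · have := choose_two_ge_six ha
      omega
  · have hsum : a.choose 2 + b = 4 := by simpa [Finset.sum_range_succ] using hsum.symm
    have hb : 1 ≤ b := by simpa [List.getLast!] using hlast
    have hba : b < a := List.isChain_pair (R := (· > ·)) |>.mp hchain
    have ha : a ≤ 3 := by
      by_contra! ha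
      have := choose_two_ge_six ha
      omega
    interval_cases a <;> interval_cases b <;> simp_all [Finset.sum_range_succ]
  · simp at hlen

theorem not_macaulayLE_four_two_six : ¬ MacaulayLE 4 2 6 := by
  rintro ⟨m, hm, hle⟩
  have := hm.eq_five_of_four_two
  omega

theorem not_isSISequence_of_not_macaulayLE {H : ℕ → ℕ} {e i : ℕ} (hi : 1 ≤ i)
    (hie : i + 1 ≤ e / 2) (hmac : ¬ MacaulayLE (FirstDiff H i) i (FirstDiff H (i + 1))) :
    ¬ IsSISequence H e :=
  fun ⟨_, _, hO⟩ => hmac (hO i hi hie)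

theorem firstDiff_succ (H : ℕ → ℕ) (i : ℕ) : FirstDiff H (i + 1) = H (i + 1) - H i := rfl

def trivialExtensionPart (e i : ℕ) : ℕ :=
  min ((i + 2).choose 2) ((i + 1) + (e - i + 1).choose 2)

def trivialExtensionH (e i : ℕ) : ℕ :=
  if i = 0 ∨ i = e then 1 else trivialExtensionPart e i + trivialExtensionPart e (e - i)

theorem trivialExtensionPart_eq (e i : ℕ) :
    trivialExtensionPart e i = i + 1 + (min i (e - i) + 1).choose 2 := by
  have hmono : Monotone fun n : ℕ => (n + 1).choose 2 :=
    fun _ _ h => Nat.choose_le_choose 2 (Nat.succ_le_succ h)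
  rw [trivialExtensionPart, Nat.choose_succ_succ', Nat.choose_one_right, Nat.add_min_add_left,
    hmono.map_min]

theorem trivialExtensionH_eq {e i : ℕ} (hi : 0 < i) (hie : i < e) :
    trivialExtensionH e i = e + 2 + 2 * (min i (e - i) + 1).choose 2 := by
  rw [trivialExtensionH, if_neg (by omega), trivialExtensionPart_eq, trivialExtensionPart_eq,
    Nat.sub_sub_self hie.le, min_comm (e - i)]
  omega

theorem trivialExtensionH_of_two_mul_le {e i : ℕ} (hi : 0 < i) (hie : 2 * i ≤ e) :
    trivialExtensionH e i = e + 2 + 2 * (i + 1).choose 2 := by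
  rw [trivialExtensionH_eq hi (by omega), min_eq_left (by omega)]

/-- For every `e ≥ 6`, the Gorenstein sequence `H` is not an SI-sequence:
its first difference starts `(1, e+3, 4, 6, …)` and fails Macaulay's bound
from degree 2 to degree 3 (`6 > 4^{<2>} = 5`). -/
theorem trivial_extension_not_SI (e : ℕ) (he : 6 ≤ e) :
    letI h : ℕ → ℕ := fun i => min ((i + 2).choose 2) ((i + 1) + (e - i + 1).choose 2)
    letI H : ℕ → ℕ := fun i => if i = 0 ∨ i = e then 1 else h i + h (e - i)
    FirstDiff H 0 = 1 ∧ FirstDiff H 1 = e + 3 ∧ FirstDiff H 2 = 4 ∧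
      FirstDiff H 3 = 6 ∧ ¬ MacaulayLE (FirstDiff H 2) 2 (FirstDiff H 3) ∧
      ¬ IsSISequence H e := by
  have hH0 : trivialExtensionH e 0 = 1 := if_pos (Or.inl rfl)
  have hH1 : trivialExtensionH e 1 = e + 4 := trivialExtensionH_of_two_mul_le one_pos (by omega)
  have hH2 : trivialExtensionH e 2 = e + 8 := trivialExtensionH_of_two_mul_le two_pos (by omega)
  have hH3 : trivialExtensionH e 3 = e + 14 := trivialExtensionH_of_two_mul_le three_pos (by omega)
  have hd1 : FirstDiff (trivialExtensionH e) 1 = e + 3 := by rw [firstDiff_succ, hH1, hH0]; omega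
  have hd2 : FirstDiff (trivialExtensionH e) 2 = 4 := by rw [firstDiff_succ, hH2, hH1]; omega
  have hd3 : FirstDiff (trivialExtensionH e) 3 = 6 := by rw [firstDiff_succ, hH3, hH2]; omega
  have hmac : ¬ MacaulayLE (FirstDiff (trivialExtensionH e) 2) 2
      (FirstDiff (trivialExtensionH e) 3) := by
    rw [hd2, hd3]; exact not_macaulayLE_four_two_six
  exact ⟨hH0, hd1, hd2, hd3, hmac, not_isSISequence_of_not_macaulayLE (i := 2) one_le_two
    (by omega) hmac⟩
end

section
/- For d ≥ 10, with H_{d-2} = C(d,2)+C(d+2,2)+3, H_{d-1} = C(d+1,2)+C(d+2,2)+2, and H_d = 2·C(d+2,2)+1, the first difference satisfies H_{d-1} - H_{d-2} = d - 1 and H_d - H_{d-1} = d; consequently the first difference is not an O-sequence since d > (d-1)^{<d-1>} = d - 1. -/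

lemma getLast!_eq_getD (l : List ℕ) (h : l ≠ []) : l.getLast! = l.getD (l.length - 1) 0 := by
  cases l with
  | nil => exact absurd rfl h
  | cons a t =>
    rw [List.getD_eq_getElem _ _ (by simp)]
    simp [List.getLast!, List.getLast_eq_getElem]

lemma macaulay_self (i : ℕ) (hi : 1 ≤ i) (m : ℕ) (hm : MacaulayNext i i m) : m = i := by
  obtain ⟨ns, ⟨hne, hlen, hch, hlast, hsum⟩, hmeq⟩ := hm
  rw [getLast!_eq_getD ns hne] at hlast
  have Lpos : 0 < ns.length := List.length_pos_iff.mpr hne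
  have hgt : ∀ k, k + 1 < ns.length → ns.getD (k + 1) 0 < ns.getD k 0 := by
    intro k hk
    have h := List.isChain_iff_getElem.mp hch k (by omega)
    rw [List.getD_eq_getElem _ _ (show k + 1 < ns.length from hk),
        List.getD_eq_getElem _ _ (show k < ns.length by omega)]
    simpa using h
  have lower : ∀ k, k < ns.length → i ≤ ns.getD k 0 + k := by
    have H : ∀ j, ∀ k, k < ns.length → ns.length - 1 - k = j → i ≤ ns.getD k 0 + k := by
      intro j
      induction j with
      | zero =>
        intro k hk hj
        have hk1 : k = ns.length - 1 := by omega
        subst hk1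
        omega
      | succ j ih =>
        intro k hk hj
        have h1 := ih (k + 1) (by omega) (by omega)
        have h2 := hgt k (by omega)
        omega
    intro k hk
    exact H (ns.length - 1 - k) k hk rfl
  have upper : ∀ k, k < ns.length → ns.getD k 0 ≤ i - k := by
    by_contra hcon
    push_neg at hcon
    obtain ⟨k, hk, hbig⟩ := hcon
    rw [← Finset.add_sum_erase _ (fun x => (ns.getD x 0).choose (i - x))
      (Finset.mem_range.mpr hk)] at hsum
    have h2 : (ns.length - 1) • 1 ≤
        ∑ x ∈ (Finset.range ns.length).erase k, (ns.getD x 0).choose (i - x) := by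
      have := Finset.card_nsmul_le_sum ((Finset.range ns.length).erase k)
        (fun x => (ns.getD x 0).choose (i - x)) 1 (by
          intro x hx
          have hx' : x < ns.length := Finset.mem_range.mp (Finset.mem_of_mem_erase hx)
          exact Nat.choose_pos (by have := lower x hx'; omega))
      rwa [Finset.card_erase_of_mem (Finset.mem_range.mpr hk), Finset.card_range] at this
    have h3 : i - k + 1 ≤ (ns.getD k 0).choose (i - k) := by
      calc i - k + 1 = (i - k + 1).choose (i - k) := (Nat.choose_succ_self_right _).symm
        _ ≤ (ns.getD k 0).choose (i - k) := Nat.choose_le_choose _ (by omega)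
    simp only [smul_eq_mul, mul_one] at h2
    omega
  have heq : ∀ k, k < ns.length → ns.getD k 0 = i - k := by
    intro k hk
    have := lower k hk
    have := upper k hk
    omega
  have hone : ∀ k ∈ Finset.range ns.length, (ns.getD k 0).choose (i - k) = 1 := by
    intro k hk
    rw [heq k (Finset.mem_range.mp hk)]
    exact Nat.choose_self _
  have hsum2 : i = ns.length := by
    rw [Finset.sum_congr rfl hone, Finset.sum_const, Finset.card_range, smul_eq_mul,
      mul_one] at hsum
    exact hsum
  have hone' : ∀ k ∈ Finset.range ns.length, (ns.getD k 0 + 1).choose (i - k + 1) = 1 := by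
    intro k hk
    have hk' := Finset.mem_range.mp hk
    rw [heq k hk']
    have : i - k + 1 = i - k + 1 := rfl
    exact Nat.choose_self _
  rw [hmeq, Finset.sum_congr rfl hone', Finset.sum_const, Finset.card_range, smul_eq_mul,
    mul_one]
  omega

/-- For `d ≥ 10`, with `H_{d-2} = C(d,2)+C(d+2,2)+3`,
`H_{d-1} = C(d+1,2)+C(d+2,2)+2` and `H_d = 2·C(d+2,2)+1`, the first
difference grows from `d-1` to `d`, violating Macaulay's bound since
`(d-1)^{<d-1>} = d-1 < d`. -/
theorem odd_case_macaulay_violation (d : ℕ) (hd : 10 ≤ d) :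
    ((d + 1).choose 2 + (d + 2).choose 2 + 2) - (d.choose 2 + (d + 2).choose 2 + 3)
        = d - 1 ∧
      (2 * (d + 2).choose 2 + 1) - ((d + 1).choose 2 + (d + 2).choose 2 + 2) = d ∧
      (∀ m, MacaulayNext (d - 1) (d - 1) m → m = d - 1) ∧
      ¬ MacaulayLE (d - 1) (d - 1) d := by
  have e1 : (d + 1).choose 2 = d.choose 2 + d := by
    rw [Nat.choose_succ_succ d 1, Nat.choose_one_right]
    show d + d.choose 2 = d.choose 2 + d
    exact Nat.add_comm _ _
  have e2 : (d + 2).choose 2 = (d + 1).choose 2 + (d + 1) := by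
    rw [show d + 2 = (d + 1) + 1 from rfl, Nat.choose_succ_succ (d + 1) 1,
      Nat.choose_one_right]
    show (d + 1) + (d + 1).choose 2 = (d + 1).choose 2 + (d + 1)
    exact Nat.add_comm _ _
  have key : ∀ m, MacaulayNext (d - 1) (d - 1) m → m = d - 1 := fun m hm =>
    macaulay_self (d - 1) (by omega) m hm
  refine ⟨by omega, by omega, key, ?_⟩
  intro h
  rw [MacaulayLE, if_neg (by omega)] at h
  obtain ⟨m, hm, hdm⟩ := h
  rw [key m hm] at hdm
  omega
end

section
/- Fix d ≥ 10 and define the even-socle-degree sequence h of length 2d by h_0 = 1, h_i = C(i+2,2) for 1 ≤ i ≤ d, h_{d+1} = C(d+2,2)+1, h_{d+2} = C(d+2,2)+2, and h_{2d-1-j} = min(C(d+2,2)+2, 2·C(j+2,2)) for 0 ≤ j ≤ d-3. Let H_i = h_i + h_{2d-i} for 1 ≤ i ≤ 2d-1 with H_0 = H_{2d} = 1. Then H_{d-2} = C(d,2)+C(d+2,2)+2, H_{d-1} = C(d+1,2)+C(d+2,2)+1, H_d = 2·C(d+2,2), and hence H_{d-1} - H_{d-2} = d-1 and H_d - H_{d-1}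 = d. -/
/-- For `d ≥ 10`, the even-socle-degree (`e = 2d`) construction: the trivial
extension `H` of `h` satisfies `H (d-2) = C(d,2)+C(d+2,2)+2`,
`H (d-1) = C(d+1,2)+C(d+2,2)+1`, `H d = 2·C(d+2,2)`, hence the first
difference grows from `d-1` to `d`. -/
theorem even_case_extension_values (d : ℕ) (hd : 10 ≤ d) :
    letI h : ℕ → ℕ := fun i =>
      if i = 0 then 1
      else if i ≤ d then (i + 2).choose 2
      else if i ≤ d + 2 then (d + 2).choose 2 + (i - d)
      else min ((d + 2).choose 2 + 2) (2 * ((2 * d - 1 - i) + 2).choose 2)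
    letI H : ℕ → ℕ := fun i =>
      if i = 0 ∨ i = 2 * d then 1 else h i + h (2 * d - i)
    H (d - 2) = d.choose 2 + (d + 2).choose 2 + 2 ∧
      H (d - 1) = (d + 1).choose 2 + (d + 2).choose 2 + 1 ∧
      H d = 2 * (d + 2).choose 2 ∧
      H (d - 1) - H (d - 2) = d - 1 ∧ H d - H (d - 1) = d := by
  have e1 : (d + 1).choose 2 = d.choose 1 + d.choose 2 := Nat.choose_succ_succ d 1
  have e2 : (d + 2).choose 2 = (d + 1).choose 1 + (d + 1).choose 2 :=
    Nat.choose_succ_succ (d + 1) 1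
  simp only [Nat.choose_one_right] at e1 e2
  have i1 : 2 * d - (d - 2) = d + 2 := by omega
  have i2 : 2 * d - (d - 1) = d + 1 := by omega
  have i3 : 2 * d - d = d := by omega
  have i4 : d - 2 + 2 = d := by omega
  have i5 : d - 1 + 2 = d + 1 := by omega
  beta_reduce
  rw [i1, i2, i3, i4, i5]
  have n1 : ¬(d - 2 = 0 ∨ d - 2 = 2 * d) := by omega
  have n2 : ¬(d - 1 = 0 ∨ d - 1 = 2 * d) := by omega
  have n3 : ¬(d = 0 ∨ d = 2 * d) := by omega
  have q1 : ¬(d - 2 = 0) := by omega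
  have q2 : d - 2 ≤ d := by omega
  have q3 : ¬(d - 1 = 0) := by omega
  have q4 : d - 1 ≤ d := by omega
  have q5 : ¬(d = 0) := by omega
  have q6 : d ≤ d := le_rfl
  have q7 : ¬(d + 2 = 0) := by omega
  have q8 : ¬(d + 2 ≤ d) := by omega
  have q9 : d + 2 ≤ d + 2 := le_rfl
  have q10 : ¬(d + 1 = 0) := by omega
  have q11 : ¬(d + 1 ≤ d) := by omega
  have q12 : d + 1 ≤ d + 2 := by omega
  simp only [if_neg n1, if_neg n2, if_neg n3, if_neg q1, if_pos q2, if_neg q3,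
    if_pos q4, if_neg q5, if_pos q6, if_neg q7, if_neg q8, if_pos q9,
    if_neg q10, if_neg q11, if_pos q12]
  omega
end
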